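/- (Compute-optimality up to a constant preserves collapse.) Let m ≥ 1, a_i > 0, μ_i, ν_i ≥ 0 with μ_i + ν_i > 0, κ > 0, γ > 0, λ > 0. Set b_i = a_i·κ^(−μ_i), β_i = μ_i·γ + ν_i, and suppose β₁ = … = β_k < β_{k+1} ≤ … ≤ β_m for some 1 ≤ k ≤ m, with ε = β_{k+1} − β₁ (ε = +∞ if k = m). Define the rescaled horizon t_λ*(p) = λ·κ·p^γ and ℓ_λ(x,p) = (Σᵢ b_i·λ^(−μ_i)·x^(−μ_i)·p^(−β_i))/(Σᵢ b_i·λ^(−μ_i)·p^(−β_i)). Then for every fixed x ∈ (0,1], ℓ_λ(x,p) → (Σ_{i≤k} b_i·λ^(−μ_i)·x^(−μ_i))/(Σ_{i≤k} b_i·λ^(−μ_i)) as p → ∞, with error O(p^(−ε)) when k < m and zero error when k = m. Hence replacing the training horizon by any constant multiple λ·t*(p) preserves the asymptotic scaling collapse, only changing the coefficients b_i to b_i·λ^(−μ_i). -/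
import Mathlib

open Finset Filter Real in
theorem collapse_aux (m k : ℕ) (hm : 0 < m) (hk : 1 ≤ k) (hkm : k ≤ m)
    (c g β : Fin m → ℝ) (hc : ∀ i, 0 < c i) (hg : ∀ i, 0 < g i)
    (htie : ∀ i : Fin m, i.val < k → β i = β ⟨0, hm⟩)
    (hmono : Monotone β)
    (hgap : ∀ i : Fin m, k ≤ i.val → β ⟨0, hm⟩ < β i) :
    Tendsto (fun p : ℝ =>
        (∑ i, c i * g i * p ^ (-(β i))) / (∑ i, c i * p ^ (-(β i)))) atTop
      (nhds ((∑ i ∈ univ.filter (fun i : Fin m => i.val < k), c i * g i) /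
        (∑ i ∈ univ.filter (fun i : Fin m => i.val < k), c i))) ∧
    (∀ h : k < m, ∃ C : ℝ, 0 < C ∧ ∀ p : ℝ, 1 ≤ p →
      |(∑ i, c i * g i * p ^ (-(β i))) / (∑ i, c i * p ^ (-(β i))) -
        (∑ i ∈ univ.filter (fun i : Fin m => i.val < k), c i * g i) /
        (∑ i ∈ univ.filter (fun i : Fin m => i.val < k), c i)| ≤
        C * p ^ (-(β ⟨k, h⟩ - β ⟨0, hm⟩))) ∧
    (k = m → ∀ p : ℝ, 0 < p →
      (∑ i, c i * g i * p ^ (-(β i))) / (∑ i, c i * p ^ (-(β i))) =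
        (∑ i ∈ univ.filter (fun i : Fin m => i.val < k), c i * g i) /
        (∑ i ∈ univ.filter (fun i : Fin m => i.val < k), c i)) := by
  set β0 := β ⟨0, hm⟩ with hβ0
  set A := ∑ i ∈ univ.filter (fun i : Fin m => i.val < k), c i * g i with hA
  set B := ∑ i ∈ univ.filter (fun i : Fin m => i.val < k), c i with hB
  have hmem0 : (⟨0, hm⟩ : Fin m) ∈ univ.filter (fun i : Fin m => i.val < k) := by
    simp only [Finset.mem_filter, Finset.mem_univ, true_and]; omega
  have hApos : 0 < A := Finset.sum_pos (fun i _ => mul_pos (hc i) (hg i)) ⟨_, hmem0⟩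
  have hBpos : 0 < B := Finset.sum_pos (fun i _ => hc i) ⟨_, hmem0⟩
  set RN : ℝ → ℝ := fun p => ∑ i ∈ univ.filter (fun i : Fin m => ¬ i.val < k),
      c i * g i * p ^ (β0 - β i) with hRN
  set RD : ℝ → ℝ := fun p => ∑ i ∈ univ.filter (fun i : Fin m => ¬ i.val < k),
      c i * p ^ (β0 - β i) with hRD
  have hident : ∀ p : ℝ, 0 < p →
      (∑ i, c i * g i * p ^ (-(β i))) / (∑ i, c i * p ^ (-(β i)))
        = (A + RN p) / (B + RD p) := by
    intro p hp
    have hne : p ^ (-β0) ≠ 0 := ne_of_gt (Real.rpow_pos_of_pos hp _)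
    have hterm : ∀ i : Fin m, p ^ (-β0) * p ^ (β0 - β i) = p ^ (-(β i)) := by
      intro i
      rw [← Real.rpow_add hp]
      congr 1; ring
    have hnum : (∑ i, c i * g i * p ^ (-(β i)))
        = p ^ (-β0) * (A + RN p) := by
      have h1 : (∑ i, c i * g i * p ^ (-(β i)))
          = p ^ (-β0) * ∑ i, c i * g i * p ^ (β0 - β i) := by
        rw [Finset.mul_sum]
        refine Finset.sum_congr rfl fun i _ => ?_
        rw [← hterm i]; ring
      rw [h1]
      congr 1
      rw [← Finset.sum_filter_add_sum_filter_not univ (fun i : Fin m => i.val < k)]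
      congr 1
      refine Finset.sum_congr rfl fun i hi => ?_
      have hik : i.val < k := (Finset.mem_filter.mp hi).2
      rw [htie i hik, sub_self, Real.rpow_zero, mul_one]
    have hden : (∑ i, c i * p ^ (-(β i)))
        = p ^ (-β0) * (B + RD p) := by
      have h1 : (∑ i, c i * p ^ (-(β i)))
          = p ^ (-β0) * ∑ i, c i * p ^ (β0 - β i) := by
        rw [Finset.mul_sum]
        refine Finset.sum_congr rfl fun i _ => ?_
        rw [← hterm i]; ring
      rw [h1]
      congr 1
      rw [← Finset.sum_filter_add_sum_filter_not univ (fun i : Fin m => i.val < k)]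
      congr 1
      refine Finset.sum_congr rfl fun i hi => ?_
      have hik : i.val < k := (Finset.mem_filter.mp hi).2
      rw [htie i hik, sub_self, Real.rpow_zero, mul_one]
    rw [hnum, hden, mul_div_mul_left _ _ hne]
  have hRNnonneg : ∀ p : ℝ, 0 < p → 0 ≤ RN p := by
    intro p hp
    exact Finset.sum_nonneg fun i _ =>
      (mul_pos (mul_pos (hc i) (hg i)) (Real.rpow_pos_of_pos hp _)).le
  have hRDnonneg : ∀ p : ℝ, 0 < p → 0 ≤ RD p := by
    intro p hp
    exact Finset.sum_nonneg fun i _ =>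
      (mul_pos (hc i) (Real.rpow_pos_of_pos hp _)).le
  -- the zero-error case
  have hzero : k = m → ∀ p : ℝ, 0 < p →
      (∑ i, c i * g i * p ^ (-(β i))) / (∑ i, c i * p ^ (-(β i))) = A / B := by
    intro hke p hp
    have hfe : univ.filter (fun i : Fin m => ¬ i.val < k) = ∅ := by
      refine Finset.filter_eq_empty_iff.mpr fun i _ => ?_
      have := i.isLt; omega
    have h1 : RN p = 0 := by simp only [hRN]; rw [hfe, Finset.sum_empty]
    have h2 : RD p = 0 := by simp only [hRD]; rw [hfe, Finset.sum_empty]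
    rw [hident p hp, h1, h2, add_zero, add_zero]
  clear_value β0 A B RN RD
  have hquant : ∀ h : k < m, ∃ C : ℝ, 0 < C ∧ ∀ p : ℝ, 1 ≤ p →
      |(∑ i, c i * g i * p ^ (-(β i))) / (∑ i, c i * p ^ (-(β i))) - A / B| ≤
        C * p ^ (-(β ⟨k, h⟩ - β0)) := by
    intro h
    set ε := β ⟨k, h⟩ - β0 with hε_def
    have hε : 0 < ε := sub_pos.mpr (hgap ⟨k, h⟩ le_rfl)
    set SN := ∑ i ∈ univ.filter (fun i : Fin m => ¬ i.val < k), c i * g i with hSN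
    set SD := ∑ i ∈ univ.filter (fun i : Fin m => ¬ i.val < k), c i with hSD
    have hmemk : (⟨k, h⟩ : Fin m) ∈ univ.filter (fun i : Fin m => ¬ i.val < k) := by
      simp only [Finset.mem_filter, Finset.mem_univ, true_and]; omega
    clear_value SN SD
    have hSNpos : 0 < SN := by
      rw [hSN]; exact Finset.sum_pos (fun i _ => mul_pos (hc i) (hg i)) ⟨_, hmemk⟩
    have hSDpos : 0 < SD := by
      rw [hSD]; exact Finset.sum_pos (fun i _ => hc i) ⟨_, hmemk⟩
    have hRNle : ∀ p : ℝ, 1 ≤ p → RN p ≤ SN * p ^ (-ε) := by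
      intro p hp
      simp only [hRN]
      rw [hSN, Finset.sum_mul]
      refine Finset.sum_le_sum fun i hi => ?_
      have hki : k ≤ i.val := by
        have := (Finset.mem_filter.mp hi).2; omega
      have hle : β0 - β i ≤ -ε := by
        have : β ⟨k, h⟩ ≤ β i := hmono (show (⟨k, h⟩ : Fin m) ≤ i from hki)
        rw [hε_def]; linarith
      calc c i * g i * p ^ (β0 - β i)
          ≤ c i * g i * p ^ (-ε) :=
            mul_le_mul_of_nonneg_left (Real.rpow_le_rpow_of_exponent_le hp hle)
              (mul_pos (hc i) (hg i)).le
        _ = c i * g i * p ^ (-ε) := rfl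
    have hRDle : ∀ p : ℝ, 1 ≤ p → RD p ≤ SD * p ^ (-ε) := by
      intro p hp
      simp only [hRD]
      rw [hSD, Finset.sum_mul]
      refine Finset.sum_le_sum fun i hi => ?_
      have hki : k ≤ i.val := by
        have := (Finset.mem_filter.mp hi).2; omega
      have hle : β0 - β i ≤ -ε := by
        have : β ⟨k, h⟩ ≤ β i := hmono (show (⟨k, h⟩ : Fin m) ≤ i from hki)
        rw [hε_def]; linarith
      exact mul_le_mul_of_nonneg_left (Real.rpow_le_rpow_of_exponent_le hp hle) (hc i).le
    refine ⟨(B * SN + A * SD) / (B * B), by positivity, fun p hp => ?_⟩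
    have hp0 : (0:ℝ) < p := lt_of_lt_of_le one_pos hp
    have hRNn := hRNnonneg p hp0
    have hRDn := hRDnonneg p hp0
    have hDpos : 0 < B + RD p := by linarith
    have hpe : 0 < p ^ (-ε) := Real.rpow_pos_of_pos hp0 _
    rw [hident p hp0]
    have hdiff : (A + RN p) / (B + RD p) - A / B
        = (B * RN p - A * RD p) / ((B + RD p) * B) := by
      field_simp
      ring
    rw [hdiff, abs_div, abs_of_pos (mul_pos hDpos hBpos)]
    have h1 : 0 ≤ B * RN p := mul_nonneg hBpos.le hRNn
    have h2 : 0 ≤ A * RD p := mul_nonneg hApos.le hRDn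
    have habs : |B * RN p - A * RD p| ≤ B * RN p + A * RD p := by
      rw [abs_le]
      constructor <;> nlinarith
    calc |B * RN p - A * RD p| / ((B + RD p) * B)
        ≤ (B * RN p + A * RD p) / ((B + RD p) * B) := by gcongr
      _ ≤ (B * RN p + A * RD p) / (B * B) := by
          gcongr <;> nlinarith
      _ ≤ (B * (SN * p ^ (-ε)) + A * (SD * p ^ (-ε))) / (B * B) := by
          gcongr
          · exact hRNle p hp
          · exact hRDle p hp
      _ = (B * SN + A * SD) / (B * B) * p ^ (-ε) := by
          field_simp

  refine ⟨?_, hquant, hzero⟩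
  rcases eq_or_lt_of_le hkm with hke | hklt
  · exact Tendsto.congr'
      (by filter_upwards [eventually_gt_atTop (0:ℝ)] with p hp
          exact (hzero hke p hp).symm) tendsto_const_nhds
  · obtain ⟨C, hC, hbound⟩ := hquant hklt
    have hε : 0 < β ⟨k, hklt⟩ - β0 := sub_pos.mpr (hgap ⟨k, hklt⟩ le_rfl)
    have h0 : Tendsto (fun p : ℝ =>
        (∑ i, c i * g i * p ^ (-(β i))) / (∑ i, c i * p ^ (-(β i))) - A / B)
        atTop (nhds 0) := by
      refine squeeze_zero_norm'
        (a := fun p : ℝ => C * p ^ (-(β ⟨k, hklt⟩ - β0))) ?_ ?_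
      · filter_upwards [eventually_ge_atTop (1:ℝ)] with p hp
        rw [Real.norm_eq_abs]
        exact hbound p hp
      · simpa using ((tendsto_rpow_neg_atTop hε).const_mul C)
    have h1 := h0.add_const (A / B)
    simpa using h1



open Finset Filter in
/-- **Compute-optimality up to a constant preserves collapse.**
Replacing the horizon `t*(p) = κ·p^γ` by `λ·κ·p^γ` only changes the coefficients
`bᵢ` to `bᵢ·λ^(−μᵢ)`: the rescaled normalized curves
`ℓ_λ(x,p) = (Σᵢ bᵢ·λ^(−μᵢ)·x^(−μᵢ)·p^(−βᵢ))/(Σᵢ bᵢ·λ^(−μᵢ)·p^(−βᵢ))` still converge,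
for each fixed `x ∈ (0,1]`, to the `p`-independent curve
`(Σ_{i<k} bᵢ·λ^(−μᵢ)·x^(−μᵢ))/(Σ_{i<k} bᵢ·λ^(−μᵢ))` as `p → ∞`, with error `O(p^(−ε))`
when `k < m` and zero error when `k = m`. -/
theorem stmt_11
    (m k : ℕ) (hk : 1 ≤ k) (hkm : k ≤ m)
    (a μ ν : Fin m → ℝ)
    (ha : ∀ i, 0 < a i) (hμ : ∀ i, 0 ≤ μ i) (hν : ∀ i, 0 ≤ ν i)
    (hμν : ∀ i, 0 < μ i + ν i)
    (κ γ lam : ℝ) (hκ : 0 < κ) (hγ : 0 < γ) (hlam : 0 < lam)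
    (b β : Fin m → ℝ)
    (hb : ∀ i, b i = a i * κ ^ (-(μ i)))
    (hβ : ∀ i, β i = μ i * γ + ν i)
    (htie : ∀ i : Fin m, i.val < k → β i = β ⟨0, by omega⟩)
    (hmono : Monotone β)
    (hgap : ∀ i : Fin m, k ≤ i.val → β ⟨0, by omega⟩ < β i)
    (ℓlam : ℝ → ℝ → ℝ)
    (hℓlam : ∀ x p : ℝ, ℓlam x p =
      (∑ i, b i * lam ^ (-(μ i)) * x ^ (-(μ i)) * p ^ (-(β i))) /
        (∑ i, b i * lam ^ (-(μ i)) * p ^ (-(β i)))) :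
    ∀ x ∈ Set.Ioc (0:ℝ) 1,
      Tendsto (fun p : ℝ => ℓlam x p) atTop
        (nhds ((∑ i ∈ univ.filter (fun i : Fin m => i.val < k),
            b i * lam ^ (-(μ i)) * x ^ (-(μ i))) /
          (∑ i ∈ univ.filter (fun i : Fin m => i.val < k), b i * lam ^ (-(μ i))))) ∧
      (∀ h : k < m, ∃ C : ℝ, 0 < C ∧ ∃ P₀ : ℝ, 0 < P₀ ∧ ∀ p : ℝ, P₀ ≤ p →
        |ℓlam x p - (∑ i ∈ univ.filter (fun i : Fin m => i.val < k),
            b i * lam ^ (-(μ i)) * x ^ (-(μ i))) /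
          (∑ i ∈ univ.filter (fun i : Fin m => i.val < k), b i * lam ^ (-(μ i)))| ≤
            C * p ^ (-(β ⟨k, h⟩ - β ⟨0, by omega⟩))) ∧
      (k = m → ∀ p : ℝ, 0 < p →
        ℓlam x p = (∑ i ∈ univ.filter (fun i : Fin m => i.val < k),
            b i * lam ^ (-(μ i)) * x ^ (-(μ i))) /
          (∑ i ∈ univ.filter (fun i : Fin m => i.val < k), b i * lam ^ (-(μ i)))) := by
  intro x hx
  obtain ⟨hx0, _⟩ := hx
  have hm : 0 < m := lt_of_lt_of_le hk hkm
  have hc : ∀ i : Fin m, 0 < b i * lam ^ (-(μ i)) := fun i => by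
    rw [hb i]
    exact mul_pos (mul_pos (ha i) (Real.rpow_pos_of_pos hκ _))
      (Real.rpow_pos_of_pos hlam _)
  have hg : ∀ i : Fin m, 0 < x ^ (-(μ i)) := fun i => Real.rpow_pos_of_pos hx0 _
  have haux := collapse_aux m k hm hk hkm
    (fun i => b i * lam ^ (-(μ i))) (fun i => x ^ (-(μ i))) β hc hg htie hmono hgap
  refine ⟨?_, ?_, ?_⟩
  · have h1 := haux.1
    refine h1.congr' ?_
    filter_upwards with p
    rw [hℓlam]
  · intro h
    obtain ⟨C, hC, hbound⟩ := haux.2.1 h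
    refine ⟨C, hC, 1, one_pos, fun p hp => ?_⟩
    rw [hℓlam]
    exact hbound p hp
  · intro hke p hp
    rw [hℓlam]
    exact haux.2.2 hke p hp
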